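/- arXiv:2109.04952 — 2 statements merged into one kernel-verified Lean document; each statement's English description precedes it below -/
import Mathlib

section
/- Let n ≥ 3 and 1 ≤ k ≤ n−2 be integers and let p > n−k be real. Set β = (p+k−n)/(p−1) and suppose 0 < λ < χ̆(p,n,k) := min( (p+k−n)(k+p−2)/((p−1)(2p−n+k−2)), k/(p−1) ). Define û(x) = |x''|^β · |x|^{−(λ+β)} for x ∈ ℝⁿ with x'' ≠ 0. Then û is a p-supersolution on ℝⁿ ∖ ℝᵏ: for every x with x'' ≠ 0 one has ∑_{i=1}^n ∂/∂x_i ( ‖∇û(x)‖^{p−2} · ∂û/∂x_i(x) ) ≤ 0. -/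
open scoped RealInnerProductSpace
open Real MeasureTheory

noncomputable section

/-- The divergence of a vector field on `ℝⁿ`, i.e. the trace of its Jacobian. -/
def vdiv {n : ℕ} (V : EuclideanSpace ℝ (Fin n) → EuclideanSpace ℝ (Fin n))
    (x : EuclideanSpace ℝ (Fin n)) : ℝ :=
  LinearMap.trace ℝ (EuclideanSpace ℝ (Fin n)) (fderiv ℝ V x).toLinearMap

/-- `|x''|`: the norm of the last `n - k` coordinates of `x`. -/
def normPerp (n k : ℕ) (x : EuclideanSpace ℝ (Fin n)) : ℝ :=
  Real.sqrt (∑ i : Fin n, if k ≤ (i : ℕ) then x i ^ 2 else 0)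

/-- The pointwise `p`-Laplacian `∇ · (‖∇u‖^{p-2} ∇u)`. -/
def pLap (p : ℝ) {n : ℕ} (u : EuclideanSpace ℝ (Fin n) → ℝ)
    (x : EuclideanSpace ℝ (Fin n)) : ℝ :=
  vdiv (fun y => ‖gradient u y‖ ^ (p - 2) • gradient u y) x

/-!
Write `P` for the orthogonal projection onto the `x''`-coordinates, `s = ‖P x‖²`, `q = ‖x‖²` and
`α = λ + β`. Then `∇û = û W` with `W = β P x / s - α x / q`, so the `p`-Laplace field is
`û^{p-1} ‖W‖^{p-2} W`. The product rule for the divergence, together with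
`div (P x / ‖P x‖²) = (rank P - 2) / ‖P x‖²`, writes `Δ_p û` as the positive factor
`û^{p-1} ‖W‖^{p-2}` times a rational function of `s` and `q`. Once `rank P = n - k = p - β (p - 1)`
is substituted, this function equals
`-α (β (q - s) (β (k + p - 2) - λ (2p - n + k - 2)) + λ² s (k - λ (p - 1))) / (q (β² (q - s) + λ² s))`,
and the two bounds in `χ̆` make both summands of the numerator nonnegative since `s ≤ q`.
-/

lemma trace_fderiv_smul {E : Type*} [NormedAddCommGroup E] [NormedSpace ℝ E]
    [FiniteDimensional ℝ E] {f : E → ℝ} {V : E → E} {x : E}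
    (hf : DifferentiableAt ℝ f x) (hV : DifferentiableAt ℝ V x) :
    LinearMap.trace ℝ E (fderiv ℝ (fun y => f y • V y) x)
      = fderiv ℝ f x (V x) + f x * LinearMap.trace ℝ E (fderiv ℝ V x) := by
  rw [(hf.hasFDerivAt.fun_smul hV.hasFDerivAt).fderiv]
  simp [LinearMap.trace_smulRight, add_comm]

variable {E : Type*} [NormedAddCommGroup E] [InnerProductSpace ℝ E]

namespace IsStarProjection

variable [CompleteSpace E] {P : E →L[ℝ] E}

lemma inner_apply_apply_right (hP : IsStarProjection P) (x v : E) : ⟪P x, P v⟫ = ⟪P x, v⟫ := by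
  have hsymm := hP.isSelfAdjoint.isSymmetric
  have hidem : P (P v) = P v := congrArg (· v) hP.isIdempotentElem.eq
  have h1 : ⟪P x, P v⟫ = ⟪x, P (P v)⟫ := hsymm x (P v)
  have h2 : ⟪P x, v⟫ = ⟪x, P v⟫ := hsymm x v
  rw [h1, h2, hidem]

lemma inner_apply_self (hP : IsStarProjection P) (x : E) : ⟪P x, x⟫ = ‖P x‖ ^ 2 := by
  rw [← hP.inner_apply_apply_right, real_inner_self_eq_norm_sq]

lemma norm_apply_le (hP : IsStarProjection P) (x : E) : ‖P x‖ ≤ ‖x‖ := by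
  rcases (norm_nonneg (P x)).eq_or_lt with h | h
  · rw [← h]; exact norm_nonneg x
  · have hcs := real_inner_le_norm (P x) x
    rw [hP.inner_apply_self, sq] at hcs
    exact le_of_mul_le_mul_left hcs h

lemma hasFDerivAt_norm_sq_apply (hP : IsStarProjection P) (x : E) :
    HasFDerivAt (fun y => ‖P y‖ ^ 2) (2 • innerSL ℝ (P x)) x := by
  convert P.hasFDerivAt.norm_sq using 1
  ext v
  simp [hP.inner_apply_apply_right]

lemma hasFDerivAt_inv_norm_sq_apply (hP : IsStarProjection P) {x : E} (hx : P x ≠ 0) :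
    HasFDerivAt (fun y => (‖P y‖ ^ 2)⁻¹) ((-2 / ‖P x‖ ^ 4) • innerSL ℝ (P x)) x := by
  have hs : ‖P x‖ ^ 2 ≠ 0 := by positivity
  refine ((hasDerivAt_inv hs).comp_hasFDerivAt x (hP.hasFDerivAt_norm_sq_apply x)).congr_fderiv ?_
  ext v
  simp only [neg_smul, neg_apply, smul_apply, coe_innerSL_apply, nsmul_eq_mul, Nat.cast_ofNat,
    smul_eq_mul]
  ring

end IsStarProjection

section projPow

variable (P : E →L[ℝ] E) (β α : ℝ)

def projPow (y : E) : ℝ := ‖P y‖ ^ β * ‖y‖ ^ (-α)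

def projInv (y : E) : E := (‖P y‖ ^ 2)⁻¹ • P y

/-- `∇ log (projPow P β α)`. -/
def projPowLogGrad (y : E) : E := β • projInv P y - α • projInv 1 y

def projPowLogGradSq (s q : ℝ) : ℝ := β ^ 2 * s⁻¹ + (α ^ 2 - 2 * α * β) * q⁻¹

/-- `Δ_p (projPow P β α)` at `y` divided by the weight
`projPow P β α y ^ (p - 1) * ‖projPowLogGrad P β α y‖ ^ (p - 2)`, with `s = ‖P y‖²`, `q = ‖y‖²`,
`r = rank P` and `d = dim E`. -/
def projPowPLapFactor (p r d s q : ℝ) : ℝ :=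
  (p - 1) * projPowLogGradSq β α s q
    - (p - 2) * (β ^ 2 * (β - α * s / q) / s ^ 2 + (α ^ 2 - 2 * α * β) * (β - α) / q ^ 2)
      / projPowLogGradSq β α s q
    + β * (r - 2) / s - α * (d - 2) / q

variable {P β α}

lemma projPow_pos {x : E} (hx : P x ≠ 0) : 0 < projPow P β α x := by
  have hx0 : x ≠ 0 := ne_zero_of_map hx
  unfold projPow
  positivity

variable [CompleteSpace E]

lemma hasGradientAt_projPow (hP : IsStarProjection P) {x : E} (hx : P x ≠ 0) :
    HasGradientAt (projPow P β α) (projPow P β α x • projPowLogGrad P β α x) x := by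
  have hx0 : x ≠ 0 := ne_zero_of_map hx
  have hs : ‖P x‖ ^ 2 ≠ 0 := by positivity
  have hq : ‖x‖ ^ 2 ≠ 0 := by positivity
  have hpow (a γ : ℝ) (ha : 0 ≤ a) : a ^ γ = (a ^ 2) ^ (γ / 2) := by
    rw [← rpow_natCast, ← rpow_mul ha]; ring_nf
  have hu : projPow P β α = fun y => (‖P y‖ ^ 2) ^ (β / 2) * (‖y‖ ^ 2) ^ (-α / 2) := by
    funext y
    rw [projPow, hpow _ β (norm_nonneg _), hpow _ (-α) (norm_nonneg _)]
  have h := ((hP.hasFDerivAt_norm_sq_apply x).rpow_const (p := β / 2) (Or.inl hs)).mul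
    ((hasStrictFDerivAt_norm_sq x).hasFDerivAt.rpow_const (p := -α / 2) (Or.inl hq))
  rw [hasGradientAt_iff_hasFDerivAt, hu]
  refine h.congr_fderiv ?_
  ext v
  simp only [rpow_sub_one hq, rpow_sub_one hs, add_apply, smul_apply, coe_innerSL_apply,
    nsmul_eq_mul, Nat.cast_ofNat, smul_eq_mul, projPowLogGrad, projInv, one_apply_eq_self,
    map_smul, map_sub, sub_apply, InnerProductSpace.toDual_apply_apply]
  field_simp
  ring

lemma inner_apply_projPowLogGrad (hP : IsStarProjection P) {x : E} (hx : P x ≠ 0) :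
    ⟪P x, projPowLogGrad P β α x⟫ = β - α * ‖P x‖ ^ 2 / ‖x‖ ^ 2 := by
  have hx0 : x ≠ 0 := ne_zero_of_map hx
  simp only [projPowLogGrad, projInv, one_apply_eq_self, inner_sub_right, inner_smul_right,
    inner_self_eq_norm_sq_to_K, ringHom_apply, hP.inner_apply_self]
  field_simp

lemma inner_self_projPowLogGrad (hP : IsStarProjection P) {x : E} (hx : P x ≠ 0) :
    ⟪x, projPowLogGrad P β α x⟫ = β - α := by
  have hx0 : x ≠ 0 := ne_zero_of_map hx
  simp only [projPowLogGrad, projInv, one_apply_eq_self, inner_sub_right, inner_smul_right,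
    real_inner_comm (P x) x, hP.inner_apply_self, inner_self_eq_norm_sq_to_K, ringHom_apply]
  field_simp

lemma norm_projPowLogGrad_sq (hP : IsStarProjection P) {x : E} (hx : P x ≠ 0) :
    ‖projPowLogGrad P β α x‖ ^ 2 = projPowLogGradSq β α (‖P x‖ ^ 2) (‖x‖ ^ 2) := by
  have hx0 : x ≠ 0 := ne_zero_of_map hx
  have hW : projPowLogGrad P β α x = (β / ‖P x‖ ^ 2) • P x - (α / ‖x‖ ^ 2) • x := by
    simp only [projPowLogGrad, projInv, smul_smul, one_apply_eq_self, div_eq_mul_inv]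
  rw [← real_inner_self_eq_norm_sq]
  nth_rewrite 1 [hW]
  rw [inner_sub_left, inner_smul_left, inner_smul_left, inner_apply_projPowLogGrad hP hx,
    inner_self_projPowLogGrad hP hx, projPowLogGradSq]
  simp only [map_div₀, ringHom_apply]
  field_simp
  ring

lemma projPowLogGradSq_pos (hαβ : α ≠ β) {s q : ℝ} (hs : 0 < s) (hsq : s ≤ q) :
    0 < projPowLogGradSq β α s q := by
  have hq : 0 < q := hs.trans_le hsq
  have hαβ' : 0 < (α - β) ^ 2 := by positivity
  have key : projPowLogGradSq β α s q = (β ^ 2 * (q - s) + (α - β) ^ 2 * s) / (s * q) := by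
    unfold projPowLogGradSq; field_simp; ring
  rw [key]
  have := sub_nonneg.mpr hsq
  positivity

lemma pLapField_projPow_eq (hP : IsStarProjection P) {y : E} (hy : P y ≠ 0) (p : ℝ) :
    ‖gradient (projPow P β α) y‖ ^ (p - 2) • gradient (projPow P β α) y
      = (projPow P β α y ^ (p - 1) * projPowLogGradSq β α (‖P y‖ ^ 2) (‖y‖ ^ 2) ^ ((p - 2) / 2))
          • projPowLogGrad P β α y := by
  have hu := projPow_pos (β := β) (α := α) hy
  rw [(hasGradientAt_projPow hP hy).gradient, norm_smul, Real.norm_of_nonneg hu.le, smul_smul,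
    ← norm_projPowLogGrad_sq hP hy, mul_rpow hu.le (norm_nonneg _),
    ← rpow_natCast, ← rpow_mul (norm_nonneg _)]
  congr 1
  rw [show (p - 1) = (p - 2) + 1 by ring, rpow_add_one hu.ne']
  push_cast
  ring_nf

lemma hasFDerivAt_projPowLogGradSq (hP : IsStarProjection P) {x : E} (hx : P x ≠ 0) :
    HasFDerivAt (fun y => projPowLogGradSq β α (‖P y‖ ^ 2) (‖y‖ ^ 2))
      ((-2 * β ^ 2 / ‖P x‖ ^ 4) • innerSL ℝ (P x)
        + (-2 * (α ^ 2 - 2 * α * β) / ‖x‖ ^ 4) • innerSL ℝ x) x := by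
  have hq := (IsStarProjection.one (E →L[ℝ] E)).hasFDerivAt_inv_norm_sq_apply
    (ne_zero_of_map hx)
  simp only [one_apply_eq_self] at hq
  refine (((hP.hasFDerivAt_inv_norm_sq_apply hx).const_mul (β ^ 2)).add
    (hq.const_mul (α ^ 2 - 2 * α * β))).congr_fderiv ?_
  ext v
  simp only [add_apply, smul_apply, coe_innerSL_apply, smul_eq_mul, neg_mul]
  ring

lemma differentiableAt_projInv (hP : IsStarProjection P) {x : E} (hx : P x ≠ 0) :
    DifferentiableAt ℝ (projInv P) x :=
  (hP.hasFDerivAt_inv_norm_sq_apply hx).differentiableAt.smul P.differentiableAt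

lemma differentiableAt_projPowLogGrad (hP : IsStarProjection P) {x : E} (hx : P x ≠ 0) :
    DifferentiableAt ℝ (projPowLogGrad P β α) x :=
  ((differentiableAt_projInv hP hx).const_smul β).sub
    ((differentiableAt_projInv (IsStarProjection.one (E →L[ℝ] E)) (ne_zero_of_map hx)).const_smul α)

variable [FiniteDimensional ℝ E]

lemma trace_fderiv_projInv (hP : IsStarProjection P) {x : E} (hx : P x ≠ 0) :
    LinearMap.trace ℝ E (fderiv ℝ (projInv P) x)
      = (LinearMap.trace ℝ E P - 2) / ‖P x‖ ^ 2 := by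
  have hinv := hP.hasFDerivAt_inv_norm_sq_apply hx
  unfold projInv
  rw [trace_fderiv_smul hinv.differentiableAt P.differentiableAt, hinv.fderiv, P.fderiv]
  simp only [smul_apply, coe_innerSL_apply, inner_self_eq_norm_sq_to_K, ringHom_apply, smul_eq_mul]
  field_simp
  ring

lemma trace_fderiv_projPowLogGrad (hP : IsStarProjection P) {x : E} (hx : P x ≠ 0) :
    LinearMap.trace ℝ E (fderiv ℝ (projPowLogGrad P β α) x)
      = β * (LinearMap.trace ℝ E P - 2) / ‖P x‖ ^ 2
        - α * (Module.finrank ℝ E - 2) / ‖x‖ ^ 2 := by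
  have hx0 : x ≠ 0 := ne_zero_of_map hx
  have hd := ((differentiableAt_projInv hP hx).hasFDerivAt.const_smul β).sub
    ((differentiableAt_projInv (IsStarProjection.one (E →L[ℝ] E)) hx0).hasFDerivAt.const_smul α)
  rw [show projPowLogGrad P β α = β • projInv P - α • projInv 1 from rfl, hd.fderiv]
  simp only [ContinuousLinearMap.toLinearMap_sub, ContinuousLinearMap.toLinearMap_smul, map_sub,
    map_smul, smul_eq_mul, trace_fderiv_projInv hP hx,
    trace_fderiv_projInv (IsStarProjection.one (E →L[ℝ] E)) hx0,
    ContinuousLinearMap.toLinearMap_one, LinearMap.trace_one, one_apply_eq_self]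
  ring

theorem trace_fderiv_pLapField_projPow (hP : IsStarProjection P) (hαβ : α ≠ β) {x : E}
    (hx : P x ≠ 0) (p : ℝ) :
    LinearMap.trace ℝ E (fderiv ℝ
        (fun y => ‖gradient (projPow P β α) y‖ ^ (p - 2) • gradient (projPow P β α) y) x)
      = projPow P β α x ^ (p - 1) * projPowLogGradSq β α (‖P x‖ ^ 2) (‖x‖ ^ 2) ^ ((p - 2) / 2)
        * projPowPLapFactor β α p (LinearMap.trace ℝ E P) (Module.finrank ℝ E) (‖P x‖ ^ 2)
          (‖x‖ ^ 2) := by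
  have hx0 : x ≠ 0 := ne_zero_of_map hx
  have hu0 := projPow_pos (β := β) (α := α) hx
  have hN0 : 0 < projPowLogGradSq β α (‖P x‖ ^ 2) (‖x‖ ^ 2) :=
    projPowLogGradSq_pos hαβ (by positivity)
      (pow_le_pow_left₀ (norm_nonneg _) (hP.norm_apply_le x) 2)
  have hfield : (fun y => ‖gradient (projPow P β α) y‖ ^ (p - 2) • gradient (projPow P β α) y)
      =ᶠ[nhds x] fun y => (projPow P β α y ^ (p - 1)
        * projPowLogGradSq β α (‖P y‖ ^ 2) (‖y‖ ^ 2) ^ ((p - 2) / 2)) • projPowLogGrad P β α y := by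
    filter_upwards [(isOpen_ne_fun P.continuous continuous_const).mem_nhds hx] with y hy
    exact pLapField_projPow_eq hP hy p
  have hM := ((hasGradientAt_iff_hasFDerivAt.mp (hasGradientAt_projPow hP hx)).rpow_const
      (p := p - 1) (Or.inl hu0.ne')).fun_mul
    ((hasFDerivAt_projPowLogGradSq hP hx).rpow_const (p := (p - 2) / 2) (Or.inl hN0.ne'))
  rw [hfield.fderiv_eq, trace_fderiv_smul hM.differentiableAt
    (differentiableAt_projPowLogGrad hP hx), hM.fderiv, trace_fderiv_projPowLogGrad hP hx]
  simp only [rpow_sub_one hu0.ne', rpow_sub_one hN0.ne', neg_mul, smul_add, map_smul, add_apply,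
    smul_apply, coe_innerSL_apply, inner_apply_projPowLogGrad hP hx, smul_eq_mul,
    inner_self_projPowLogGrad hP hx, InnerProductSpace.toDual_apply_apply,
    inner_self_eq_norm_sq_to_K, ringHom_apply, norm_projPowLogGrad_sq hP hx, projPowPLapFactor]
  have hs : ‖P x‖ ≠ 0 := norm_ne_zero_iff.mpr hx
  have hq : ‖x‖ ≠ 0 := norm_ne_zero_iff.mpr hx0
  generalize projPowLogGradSq β α (‖P x‖ ^ 2) (‖x‖ ^ 2) = N at hN0 ⊢
  generalize projPow P β α x = u at hu0 ⊢
  field_simp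
  ring

theorem trace_fderiv_pLapField_projPow_nonpos (hP : IsStarProjection P) (hαβ : α ≠ β) {x : E}
    (hx : P x ≠ 0) {p : ℝ}
    (hfactor : projPowPLapFactor β α p (LinearMap.trace ℝ E P) (Module.finrank ℝ E)
      (‖P x‖ ^ 2) (‖x‖ ^ 2) ≤ 0) :
    LinearMap.trace ℝ E (fderiv ℝ
        (fun y => ‖gradient (projPow P β α) y‖ ^ (p - 2) • gradient (projPow P β α) y) x) ≤ 0 := by
  rw [trace_fderiv_pLapField_projPow hP hαβ hx]
  refine mul_nonpos_of_nonneg_of_nonpos (mul_nonneg ?_ ?_) hfactor <;> apply rpow_nonneg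
  · exact (projPow_pos hx).le
  · exact (projPowLogGradSq_pos hαβ (by positivity)
      (pow_le_pow_left₀ (norm_nonneg _) (hP.norm_apply_le x) 2)).le

end projPow

lemma projPowPLapFactor_nonpos {β lam p k d s q : ℝ} (hβ : β * (p - 1) = p + k - d)
    (hβ0 : 0 < β) (hlam0 : 0 < lam) (hlam1 : lam * (β * (p - 1) + p - 2) ≤ β * (k + p - 2))
    (hlam2 : lam * (p - 1) ≤ k) (hs : 0 < s) (hsq : s ≤ q) :
    projPowPLapFactor β (lam + β) p (d - k) d s q ≤ 0 := by
  obtain rfl : d = p + k - β * (p - 1) := by linarith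
  have hq : 0 < q := hs.trans_le hsq
  have hqs : 0 ≤ q - s := sub_nonneg.mpr hsq
  have hH : 0 < β ^ 2 * (q - s) + lam ^ 2 * s := by positivity
  have hN : projPowLogGradSq β (lam + β) s q = (β ^ 2 * (q - s) + lam ^ 2 * s) / (s * q) := by
    unfold projPowLogGradSq; field_simp; ring
  have key : projPowPLapFactor β (lam + β) p (p + k - β * (p - 1) - k) (p + k - β * (p - 1)) s q
      = -((lam + β) * β * (β * (k + p - 2) - lam * (β * (p - 1) + p - 2)) * (q - s)
          + (lam + β) * lam ^ 2 * (k - lam * (p - 1)) * s)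
        / (q * (β ^ 2 * (q - s) + lam ^ 2 * s)) := by
    rw [projPowPLapFactor, hN]
    have hH' : β ^ 2 * (q - s) + s * lam ^ 2 ≠ 0 := by rw [mul_comm s]; exact hH.ne'
    field_simp
    ring
  rw [key]
  refine div_nonpos_of_nonpos_of_nonneg (neg_nonpos.mpr (add_nonneg ?_ ?_)) (by positivity)
  · exact mul_nonneg (mul_nonneg (by positivity) (sub_nonneg.mpr hlam1)) hqs
  · exact mul_nonneg (mul_nonneg (by positivity) (sub_nonneg.mpr hlam2)) hs.le

def tailProj (n k : ℕ) : EuclideanSpace ℝ (Fin n) →L[ℝ] EuclideanSpace ℝ (Fin n) :=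
  Matrix.toEuclideanCLM (𝕜 := ℝ) (Matrix.diagonal fun i : Fin n => if k ≤ (i : ℕ) then 1 else 0)

lemma isStarProjection_tailProj (n k : ℕ) : IsStarProjection (tailProj n k) := by
  refine IsStarProjection.map ⟨?_, ?_⟩ _
  · rw [IsIdempotentElem, Matrix.diagonal_mul_diagonal]
    congr 1; funext i; split_ifs <;> norm_num
  · rw [IsSelfAdjoint, Matrix.star_eq_conjTranspose, Matrix.diagonal_conjTranspose, star_trivial]

lemma norm_tailProj (n k : ℕ) (x : EuclideanSpace ℝ (Fin n)) :
    ‖tailProj n k x‖ = normPerp n k x := by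
  simp [tailProj, EuclideanSpace.norm_eq, Matrix.mulVec_diagonal, apply_ite, normPerp]

lemma trace_tailProj {n k : ℕ} (hkn : k ≤ n) :
    LinearMap.trace ℝ _ (tailProj n k : EuclideanSpace ℝ (Fin n) →ₗ[ℝ] EuclideanSpace ℝ (Fin n))
      = (n : ℝ) - k := by
  rw [tailProj, Matrix.coe_toEuclideanCLM_eq_toEuclideanLin,
    Matrix.toEuclideanLin_eq_toLin_orthonormal, Matrix.trace_toLin_eq, Matrix.trace_diagonal,
    Fin.sum_univ_eq_sum_range (fun i => if k ≤ i then (1 : ℝ) else 0), Finset.range_eq_Ico,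
    ← Finset.sum_Ico_consecutive _ (Nat.zero_le k) hkn,
    Finset.sum_congr rfl (fun i hi => if_neg (by simp at hi; omega)),
    Finset.sum_congr rfl (fun i hi => if_pos (by simp at hi; omega))]
  simp [Nat.cast_sub hkn]

theorem stmt1_general (n k : ℕ) (hkn : k + 2 ≤ n)
    (p : ℝ) (hp : (n : ℝ) - k < p)
    (β lam : ℝ) (hβ : β = (p + k - n) / (p - 1))
    (hlam0 : 0 < lam)
    (hlam : lam < min ((p + (k : ℝ) - n) * ((k : ℝ) + p - 2) /
        ((p - 1) * (2 * p - n + k - 2))) ((k : ℝ) / (p - 1)))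
    (uhat : EuclideanSpace ℝ (Fin n) → ℝ)
    (huhat : ∀ x, uhat x = normPerp n k x ^ β * ‖x‖ ^ (-(lam + β))) :
    ∀ x : EuclideanSpace ℝ (Fin n), normPerp n k x ≠ 0 → pLap p uhat x ≤ 0 := by
  intro x hx
  have hkn' : (k : ℝ) + 2 ≤ n := by exact_mod_cast hkn
  have hp1 : 0 < p - 1 := by linarith
  have hβ' : β * (p - 1) = p + k - n := by rw [hβ]; field_simp
  have hβ0 : 0 < β := pos_of_mul_pos_left (by linarith) hp1.le
  obtain ⟨hlam1, hlam2⟩ := lt_min_iff.mp hlam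
  rw [lt_div_iff₀ (by nlinarith), ← hβ'] at hlam1
  rw [lt_div_iff₀ hp1] at hlam2
  have hu : uhat = projPow (tailProj n k) β (lam + β) := by
    funext y; rw [huhat, projPow, norm_tailProj]
  have hPx : tailProj n k x ≠ 0 := by rwa [← norm_ne_zero_iff, norm_tailProj]
  rw [pLap, vdiv, hu]
  refine trace_fderiv_pLapField_projPow_nonpos (isStarProjection_tailProj n k)
    (by linarith) hPx ?_
  rw [trace_tailProj (by omega), finrank_euclideanSpace_fin]
  exact projPowPLapFactor_nonpos hβ' hβ0 hlam0 (by nlinarith) hlam2.le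
    (by rw [norm_tailProj]; positivity) (pow_le_pow_left₀ (norm_nonneg _)
      ((isStarProjection_tailProj n k).norm_apply_le x) 2)

/-- STATEMENT 0: for `0 < λ < χ̆(p,n,k)`, the function `û(x) = |x''|^β |x|^{-(λ+β)}` is a
`p`-supersolution on `ℝⁿ ∖ ℝᵏ`. -/
theorem stmt1 (n k : ℕ) (hn : 3 ≤ n) (hk : 1 ≤ k) (hkn : k + 2 ≤ n)
    (p : ℝ) (hp : (n : ℝ) - k < p)
    (β lam : ℝ) (hβ : β = (p + k - n) / (p - 1))
    (hlam0 : 0 < lam)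
    (hlam : lam < min ((p + (k : ℝ) - n) * ((k : ℝ) + p - 2) /
        ((p - 1) * (2 * p - n + k - 2))) ((k : ℝ) / (p - 1)))
    (uhat : EuclideanSpace ℝ (Fin n) → ℝ)
    (huhat : ∀ x, uhat x = normPerp n k x ^ β * ‖x‖ ^ (-(lam + β))) :
    ∀ x : EuclideanSpace ℝ (Fin n), normPerp n k x ≠ 0 → pLap p uhat x ≤ 0 :=
  stmt1_general n k hkn p hp β lam hβ hlam0 hlam uhat huhat
end
end

section
/- Let k ≥ 1 be an integer. Let ψ : ℝᵏ → ℝ be Lipschitz with Lipschitz constant ≤ 1, |ψ| ≤ 1, 1-periodic in each coordinate, and ∫_{[0,1]ᵏ} ψ(x') dx' = 0. Let (T_j) be a sequence of positive integers with T_1 = 1 and T_j dividing T_{j+1} for all j. Then for all positive integers m < j: | ∫_{[0,1]ᵏ} ψ(T_m x') ψ(T_j x') dx' | ≤ √k · T_m / T_j. -/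
/-!
Write `I = ∫ ψ(a x) ψ(c x)` over a fundamental domain `D` of the period lattice, with `a = T m`,
`c = T j`. The integrand is periodic, so translating `x` by `s / c` leaves `I` unchanged:
`I = ∫ ψ(a x + (a / c) s) ψ(c x + s) dx` for every `s`. By the Lipschitz bound this is within
`(a / c) ‖s‖ ≤ √k a / c` of `g s = ∫ ψ(a x) ψ(c x + s) dx` when `s ∈ D`, while by Fubini and the
mean-zero condition `g` has average zero over `D`. Averaging `I - g s` over `s ∈ D` gives the bound.
-/

open MeasureTheory Function Pointwise

theorem Function.Periodic.of_mem_addSubgroupClosure {G α : Type*} [AddCommGroup G] {f : G → α}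
    {s : Set G} (h : ∀ c ∈ s, Periodic f c) {l : G} (hl : l ∈ AddSubgroup.closure s) :
    Periodic f l := by
  induction hl using AddSubgroup.closure_induction with
  | mem c hc => exact h c hc
  | zero => exact fun x => by rw [add_zero]
  | add _ _ _ _ h₁ h₂ => exact h₁.add_period h₂
  | neg _ _ h => exact h.neg

theorem Function.Periodic.comp_natCast_smul {R M α : Type*} [Semiring R] [AddCommMonoid M]
    [Module R M] {f : M → α} {c : M} (h : Periodic f c) (n : ℕ) :
    Periodic (fun x => f ((n : R) • x)) c := fun x => by
  show f (_ • (x + c)) = _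
  rw [smul_add, Nat.cast_smul_eq_nsmul R n c]
  exact h.nsmul n _

theorem MeasureTheory.IsAddFundamentalDomain.setIntegral_add_right_of_periodic {G F : Type*}
    [AddCommGroup G] [MeasurableSpace G] [MeasurableAdd G] {μ : Measure G} [μ.IsAddLeftInvariant]
    [NormedAddCommGroup F] [NormedSpace ℝ F] {L : AddSubgroup G} [Countable L] {D : Set G}
    (hD : IsAddFundamentalDomain L D μ) {f : G → F} (hf : ∀ l ∈ L, Periodic f l) (v : G) :
    ∫ x in D, f (x + v) ∂μ = ∫ x in D, f x ∂μ :=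
  calc ∫ x in D, f (x + v) ∂μ = ∫ x in v +ᵥ D, f x ∂μ := by
        simp_rw [add_comm _ v]
        exact ((measurePreserving_vadd v μ).setIntegral_image_emb
          (measurableEmbedding_const_vadd v) f D).symm
    _ = ∫ x in D, f x ∂μ :=
        (hD.vadd_of_comm v).setIntegral_eq hD fun l x => by
          rw [AddSubgroup.vadd_def, vadd_eq_add, add_comm]
          exact hf l l.2 x

theorem integrable_mul_of_abs_le_one {X : Type*} [TopologicalSpace X] [MeasurableSpace X]
    [OpensMeasurableSpace X] {ν : Measure X} [IsFiniteMeasure ν] {f g : X → ℝ}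
    (hf : Continuous f) (hg : Continuous g) (hf1 : ∀ x, |f x| ≤ 1) (hg1 : ∀ x, |g x| ≤ 1) :
    Integrable (fun x => f x * g x) ν :=
  .of_bound (hf.mul hg).aestronglyMeasurable 1 <| ae_of_all _ fun x => by
    rw [Real.norm_eq_abs, abs_mul]
    exact mul_le_one₀ (hf1 x) (abs_nonneg _) (hg1 x)

section Correlation

variable {E : Type*} [NormedAddCommGroup E] [NormedSpace ℝ E] [MeasurableSpace E] [BorelSpace E]
  {μ : Measure E} {L : AddSubgroup E} [Countable L] {D : Set E} {ψ : E → ℝ}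

theorem setIntegral_comp_smul_mul_comp_smul_eq_shift [μ.IsAddLeftInvariant]
    (hD : IsAddFundamentalDomain L D μ) (hψ : ∀ l ∈ L, Periodic ψ l) (a : ℕ) {c : ℕ} (hc : c ≠ 0)
    (s : E) :
    ∫ x in D, ψ ((a : ℝ) • x) * ψ ((c : ℝ) • x) ∂μ =
      ∫ x in D, ψ ((a : ℝ) • x + ((a : ℝ) / c) • s) * ψ ((c : ℝ) • x + s) ∂μ := by
  have hper : ∀ l ∈ L, Periodic (fun x => ψ ((a : ℝ) • x) * ψ ((c : ℝ) • x)) l := fun l hl =>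
    ((hψ l hl).comp_natCast_smul a).mul ((hψ l hl).comp_natCast_smul c)
  rw [← hD.setIntegral_add_right_of_periodic hper ((c : ℝ)⁻¹ • s)]
  simp [smul_add, smul_smul, div_eq_mul_inv, hc]

theorem norm_setIntegral_comp_smul_mul_comp_smul_sub_le [μ.IsAddLeftInvariant]
    (hD : IsAddFundamentalDomain L D μ) (hD1 : μ D = 1) (hψ : ∀ l ∈ L, Periodic ψ l)
    (hψL : LipschitzWith 1 ψ) (hψ1 : ∀ x, |ψ x| ≤ 1) (a : ℕ) {c : ℕ} (hc : c ≠ 0) (s : E) :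
    ‖∫ x in D, ψ ((a : ℝ) • x) * ψ ((c : ℝ) • x) ∂μ -
        ∫ x in D, ψ ((a : ℝ) • x) * ψ ((c : ℝ) • x + s) ∂μ‖ ≤ a / c * ‖s‖ := by
  have : IsFiniteMeasure (μ.restrict D) := ⟨by simp [hD1]⟩
  have hint : ∀ v : E, Integrable (fun x => ψ ((a : ℝ) • x + v) * ψ ((c : ℝ) • x + s))
      (μ.restrict D) := fun v =>
    integrable_mul_of_abs_le_one
      (hψL.continuous.comp ((continuous_const_smul _).add continuous_const))
      (hψL.continuous.comp ((continuous_const_smul _).add continuous_const))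
      (fun _ => hψ1 _) (fun _ => hψ1 _)
  have hpt : ∀ x, ‖ψ ((a : ℝ) • x + ((a : ℝ) / c) • s) * ψ ((c : ℝ) • x + s) -
      ψ ((a : ℝ) • x + 0) * ψ ((c : ℝ) • x + s)‖ ≤ a / c * ‖s‖ := fun x => by
    rw [← sub_mul, norm_mul]
    calc _ ≤ ‖((a : ℝ) / c) • s‖ * 1 := by
          gcongr
          · simpa using hψL.norm_sub_le ((a : ℝ) • x + ((a : ℝ) / c) • s) ((a : ℝ) • x)
          · exact hψ1 _
      _ = a / c * ‖s‖ := by rw [mul_one, norm_smul, Real.norm_of_nonneg (by positivity)]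
  rw [setIntegral_comp_smul_mul_comp_smul_eq_shift hD hψ a hc s]
  have hbound := norm_setIntegral_le_of_norm_le_const (μ := μ) (s := D) (by simp [hD1])
    fun x _ => hpt x
  rw [integral_sub (hint _) (hint 0), measureReal_def, hD1, ENNReal.toReal_one, mul_one] at hbound
  simpa only [add_zero] using hbound

variable [SecondCountableTopology E]

theorem integrable_prod_comp_smul_mul_comp_smul_add [IsFiniteMeasure (μ.restrict D)]
    (hψc : Continuous ψ) (hψ1 : ∀ x, |ψ x| ≤ 1) (a c : ℝ) :
    Integrable (uncurry fun s y => ψ (a • y) * ψ (c • y + s))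
      ((μ.restrict D).prod (μ.restrict D)) :=
  integrable_mul_of_abs_le_one (hψc.comp (continuous_snd.const_smul a))
    (hψc.comp ((continuous_snd.const_smul c).add continuous_fst)) (fun _ => hψ1 _)
    (fun _ => hψ1 _)

variable [μ.IsAddLeftInvariant] [SFinite μ]

theorem setIntegral_setIntegral_comp_smul_mul_comp_smul_add_eq_zero
    (hD : IsAddFundamentalDomain L D μ) [IsFiniteMeasure (μ.restrict D)]
    (hψ : ∀ l ∈ L, Periodic ψ l) (hψc : Continuous ψ) (hψ1 : ∀ x, |ψ x| ≤ 1)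
    (hmean : ∫ x in D, ψ x ∂μ = 0) (a c : ℝ) :
    ∫ s in D, ∫ y in D, ψ (a • y) * ψ (c • y + s) ∂μ ∂μ = 0 := by
  have hinner : ∀ y, ∫ s in D, ψ (a • y) * ψ (c • y + s) ∂μ = 0 := fun y => by
    simp_rw [add_comm (c • y)]
    rw [integral_const_mul, hD.setIntegral_add_right_of_periodic hψ, hmean, mul_zero]
  rw [integral_integral_swap (integrable_prod_comp_smul_mul_comp_smul_add hψc hψ1 a c)]
  simp [hinner]

theorem abs_setIntegral_comp_smul_mul_comp_smul_le (hD : IsAddFundamentalDomain L D μ)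
    (hD1 : μ D = 1) {R : ℝ} (hDR : ∀ s ∈ D, ‖s‖ ≤ R) (hψ : ∀ l ∈ L, Periodic ψ l)
    (hψL : LipschitzWith 1 ψ) (hψ1 : ∀ x, |ψ x| ≤ 1) (hmean : ∫ x in D, ψ x ∂μ = 0)
    (a : ℕ) {c : ℕ} (hc : 0 < c) :
    |∫ x in D, ψ ((a : ℝ) • x) * ψ ((c : ℝ) • x) ∂μ| ≤ R * a / c := by
  have : IsFiniteMeasure (μ.restrict D) := ⟨by simp [hD1]⟩
  have hDfin : μ D < ⊤ := by simp [hD1]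
  have hDreal : μ.real D = 1 := by simp [measureReal_def, hD1]
  set I := ∫ x in D, ψ ((a : ℝ) • x) * ψ ((c : ℝ) • x) ∂μ
  set g : E → ℝ := fun s => ∫ y in D, ψ ((a : ℝ) • y) * ψ ((c : ℝ) • y + s) ∂μ
  have hg : IntegrableOn g D μ :=
    (integrable_prod_comp_smul_mul_comp_smul_add hψL.continuous hψ1 a c).integral_prod_left
  have hclose : ∀ s ∈ D, ‖I - g s‖ ≤ R * a / c := fun s hs =>
    calc ‖I - g s‖ ≤ a / c * ‖s‖ :=
          norm_setIntegral_comp_smul_mul_comp_smul_sub_le hD hD1 hψ hψL hψ1 a hc.ne' s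
      _ ≤ a / c * R := by gcongr; exact hDR s hs
      _ = R * a / c := by ring
  have hIg : I = ∫ s in D, (I - g s) ∂μ := by
    rw [integral_sub (integrable_const I) hg,
      setIntegral_setIntegral_comp_smul_mul_comp_smul_add_eq_zero hD hψ hψL.continuous hψ1 hmean,
      setIntegral_const, hDreal, one_smul, sub_zero]
  calc |I| = ‖∫ s in D, (I - g s) ∂μ‖ := by rw [← hIg, Real.norm_eq_abs]
    _ ≤ R * a / c * μ.real D := norm_setIntegral_le_of_norm_le_const hDfin hclose
    _ = R * a / c := by rw [hDreal, mul_one]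

end Correlation

namespace EuclideanSpace
variable {ι : Type*} [Fintype ι]

theorem parallelepiped_basisFun :
    parallelepiped (basisFun ι ℝ) = {x : EuclideanSpace ℝ ι | ∀ i, 0 ≤ x i ∧ x i ≤ 1} := by
  rw [← OrthonormalBasis.coe_toBasis, parallelepiped_basis_eq]
  simp [Set.mem_Icc]

theorem fundamentalDomain_basisFun_ae_eq :
    ZSpan.fundamentalDomain (basisFun ι ℝ).toBasis =ᵐ[volume]
      {x : EuclideanSpace ℝ ι | ∀ i, 0 ≤ x i ∧ x i ≤ 1} := by
  simpa [parallelepiped_basisFun] using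
    ZSpan.fundamentalDomain_ae_parallelepiped (basisFun ι ℝ).toBasis volume

theorem norm_le_sqrt_card {x : EuclideanSpace ℝ ι} (hx : ∀ i, |x i| ≤ 1) :
    ‖x‖ ≤ √(Fintype.card ι) := by
  rw [EuclideanSpace.norm_eq]
  gcongr
  calc ∑ i, ‖x i‖ ^ 2 ≤ ∑ _i : ι, (1 : ℝ) := by
        gcongr with i
        rw [Real.norm_eq_abs]
        exact pow_le_one₀ (abs_nonneg _) (hx i)
    _ = Fintype.card ι := by simp

theorem periodic_of_mem_span_basisFun [DecidableEq ι] {α : Type*} {f : EuclideanSpace ℝ ι → α}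
    (hf : ∀ i, Periodic f (single i 1)) :
    ∀ l ∈ (Submodule.span ℤ (Set.range (basisFun ι ℝ).toBasis)).toAddSubgroup, Periodic f l := by
  intro l hl
  rw [Submodule.span_int_eq_addSubgroupClosure] at hl
  refine Periodic.of_mem_addSubgroupClosure ?_ hl
  rintro _ ⟨i, rfl⟩
  simpa using hf i

end EuclideanSpace

theorem stmt16_general (k : ℕ)
    (ψ : EuclideanSpace ℝ (Fin k) → ℝ)
    (hLip : ∀ x y, |ψ x - ψ y| ≤ ‖x - y‖)
    (hbd : ∀ x, |ψ x| ≤ 1)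
    (hper : ∀ i : Fin k, ∀ x, ψ (x + EuclideanSpace.single i 1) = ψ x)
    (hmean : (∫ x in {x : EuclideanSpace ℝ (Fin k) | ∀ i, 0 ≤ x i ∧ x i ≤ 1}, ψ x) = 0)
    (T : ℕ → ℕ)
    (hTpos : ∀ j, 1 ≤ j → 0 < T j) :
    ∀ m j : ℕ, 1 ≤ m → m < j →
      |∫ x in {x : EuclideanSpace ℝ (Fin k) | ∀ i, 0 ≤ x i ∧ x i ≤ 1},
          ψ ((T m : ℝ) • x) * ψ ((T j : ℝ) • x)| ≤
        Real.sqrt k * (T m : ℝ) / (T j : ℝ) := by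
  intro m j hm hmj
  set b := (EuclideanSpace.basisFun (Fin k) ℝ).toBasis
  have hcube := EuclideanSpace.fundamentalDomain_basisFun_ae_eq (ι := Fin k)
  have : Countable (Submodule.span ℤ (Set.range b)).toAddSubgroup :=
    inferInstanceAs (Countable (Submodule.span ℤ (Set.range b)))
  rw [← setIntegral_congr_set hcube] at hmean ⊢
  refine abs_setIntegral_comp_smul_mul_comp_smul_le (ZSpan.isAddFundamentalDomain' b volume)
    ?_ (fun s hs => ?_) (EuclideanSpace.periodic_of_mem_span_basisFun hper)
    (.of_dist_le_mul fun x y => by simpa [Real.dist_eq, dist_eq_norm] using hLip x y) hbd hmean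
    (T m) (hTpos j (by omega))
  · rw [measure_congr hcube, ← EuclideanSpace.parallelepiped_basisFun,
      OrthonormalBasis.volume_parallelepiped]
  · have hs' : s ∈ {x : EuclideanSpace ℝ (Fin k) | ∀ i, 0 ≤ x i ∧ x i ≤ 1} := by
      rw [← EuclideanSpace.parallelepiped_basisFun]
      exact ZSpan.fundamentalDomain_subset_parallelepiped b hs
    simpa using EuclideanSpace.norm_le_sqrt_card fun i =>
      abs_le.2 ⟨by linarith [(hs' i).1], (hs' i).2⟩

/-- the almost-orthogonality estimate
`|∫_{[0,1]ᵏ} ψ(T_m x') ψ(T_j x') dx'| ≤ √k · T_m / T_j` for `1 ≤ m < j`. -/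
theorem stmt16 (k : ℕ) (hk : 1 ≤ k)
    (ψ : EuclideanSpace ℝ (Fin k) → ℝ)
    (hLip : ∀ x y, |ψ x - ψ y| ≤ ‖x - y‖)
    (hbd : ∀ x, |ψ x| ≤ 1)
    (hper : ∀ i : Fin k, ∀ x, ψ (x + EuclideanSpace.single i 1) = ψ x)
    (hmean : (∫ x in {x : EuclideanSpace ℝ (Fin k) | ∀ i, 0 ≤ x i ∧ x i ≤ 1}, ψ x) = 0)
    (T : ℕ → ℕ) (hT1 : T 1 = 1)
    (hTpos : ∀ j, 1 ≤ j → 0 < T j)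
    (hTdvd : ∀ j, 1 ≤ j → T j ∣ T (j + 1)) :
    ∀ m j : ℕ, 1 ≤ m → m < j →
      |∫ x in {x : EuclideanSpace ℝ (Fin k) | ∀ i, 0 ≤ x i ∧ x i ≤ 1},
          ψ ((T m : ℝ) • x) * ψ ((T j : ℝ) • x)| ≤
        Real.sqrt k * (T m : ℝ) / (T j : ℝ) :=
  stmt16_general k ψ hLip hbd hper hmean T hTpos
end
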